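/- Let x ~ p₁ and y ~ p₂ be independent random vectors in R^d, each satisfying ACoM with parameters (C₁, c₁, c₁', d, σ₁) and (C₂, c₂, c₂', d, σ₂) respectively. Then the pair (x, y) ∈ R^{2d} satisfies: for every L-Lipschitz f: R^{2d} → R and every t > 0, P(|f(x,y) − E f(x,y)| > 2t) ≤ (C₁ + C₂) exp(−(t/(L max{σ₁, σ₂}))²) + (c₁ + c₂) exp(−min{c₁', c₂'} d). -/

import Mathlib

/-!
Condition on `x`. For fixed `a`, the section `b ↦ f (a, b)` is `L`-Lipschitz, so by the
concentration of `y` the value `f (x, y)` stays within `t` of its conditional mean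
`g x = 𝔼_y f (x, y)` outside an event of probability at most the `y`-bound. The function `g` is
again `L`-Lipschitz, so by the concentration of `x` the value `g x` stays within `t` of
`𝔼 g x = 𝔼 f (x, y)` outside an event of probability at most the `x`-bound. A union bound gives
the deviation `2 t`.

Since a Lipschitz function of `x` need not be integrable, the means above could be junk values.
This is harmless: if the additive defect `c e^{-c' d}` of either vector is at least `1` the bound
is trivial, and otherwise concentration forces integrability, because the truncations
`min (|h x|) N` of a non-integrable `|h x|` have means tending to infinity and therefore are far
from their means with probability close to `1`.
-/

open MeasureTheory ProbabilityTheory Filter Topology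
open scoped ENNReal NNReal

section

variable {Ω E F : Type*} {mΩ : MeasurableSpace Ω}

/-- The paper's ACoM property, with the additive term `c e^{-c' d}` written as `ε`. -/
def HasApproxConcentration [PseudoMetricSpace E] (μ : Measure Ω) (X : Ω → E) (C σ ε : ℝ) :
    Prop :=
  ∀ (L : ℝ≥0) (h : E → ℝ), LipschitzWith L h → ∀ s : ℝ, 0 < s →
    (μ {ω | s < |h (X ω) - ∫ ω', h (X ω') ∂μ|}).toReal ≤
      C * Real.exp (-(s / ((L : ℝ) * σ)) ^ 2) + ε

theorem tendsto_mul_exp_neg_div_sq_atTop (C : ℝ) {a : ℝ} (ha : 0 < a) :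
    Tendsto (fun s : ℝ => C * Real.exp (-(s / a) ^ 2)) atTop (𝓝 0) := by
  have hsq : Tendsto (fun s : ℝ => -(s / a) ^ 2) atTop atBot :=
    tendsto_neg_atTop_atBot.comp
      ((tendsto_pow_atTop two_ne_zero).comp (tendsto_id.atTop_div_const ha))
  simpa using (Real.tendsto_exp_atBot.comp hsq).const_mul C

theorem mul_exp_neg_sq_div_mul_le_of_le {C t a σ σ' : ℝ} (hC : 0 ≤ C) (ha : 0 ≤ a)
    (hσ : 0 < σ) (hσσ' : σ ≤ σ') :
    C * Real.exp (-(t / (a * σ)) ^ 2) ≤ C * Real.exp (-(t / (a * σ')) ^ 2) := by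
  rcases ha.eq_or_lt with rfl | ha
  · simp
  rw [div_pow, div_pow]
  gcongr

theorem add_concentration_bounds_le {C₁ C₂ c₁ c₂ c₁' c₂' σ₁ σ₂ a t x : ℝ} (hC₁ : 0 ≤ C₁)
    (hC₂ : 0 ≤ C₂) (hc₁ : 0 ≤ c₁) (hc₂ : 0 ≤ c₂) (hσ₁ : 0 < σ₁) (hσ₂ : 0 < σ₂) (ha : 0 ≤ a)
    (hx : 0 ≤ x) :
    C₁ * Real.exp (-(t / (a * σ₁)) ^ 2) + c₁ * Real.exp (-c₁' * x) +
        (C₂ * Real.exp (-(t / (a * σ₂)) ^ 2) + c₂ * Real.exp (-c₂' * x)) ≤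
      (C₁ + C₂) * Real.exp (-(t / (a * max σ₁ σ₂)) ^ 2) +
        (c₁ + c₂) * Real.exp (-(min c₁' c₂') * x) := by
  have hA₁ := mul_exp_neg_sq_div_mul_le_of_le (t := t) hC₁ ha hσ₁ (le_max_left σ₁ σ₂)
  have hA₂ := mul_exp_neg_sq_div_mul_le_of_le (t := t) hC₂ ha hσ₂ (le_max_right σ₁ σ₂)
  have hB₁ : c₁ * Real.exp (-c₁' * x) ≤ c₁ * Real.exp (-(min c₁' c₂') * x) := by
    gcongr
    exact min_le_left _ _
  have hB₂ : c₂ * Real.exp (-c₂' * x) ≤ c₂ * Real.exp (-(min c₁' c₂') * x) := by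
    gcongr
    exact min_le_right _ _
  linarith

section Truncation

variable {μ : Measure Ω} [IsProbabilityMeasure μ] {Z : Ω → ℝ}

theorem tendsto_measureReal_le_atTop (hZ : AEMeasurable Z μ) :
    Tendsto (fun K : ℝ => μ.real {ω | Z ω ≤ K}) atTop (𝓝 1) := by
  have := Measure.isProbabilityMeasure_map (μ := μ) hZ
  refine (tendsto_cdf_atTop (μ.map Z)).congr fun K => ?_
  rw [cdf_eq_real, map_measureReal_apply_of_aemeasurable hZ measurableSet_Iic]
  rfl

theorem tendsto_integral_min_natCast_atTop (hZ : AEMeasurable Z μ) (hZ0 : 0 ≤ Z)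
    (hZi : ¬ Integrable Z μ) :
    Tendsto (fun N : ℕ => ∫ ω, min (Z ω) N ∂μ) atTop atTop := by
  have hmin_nonneg : ∀ (N : ℕ) ω, 0 ≤ min (Z ω) N := fun N ω => le_min (hZ0 ω) N.cast_nonneg
  have hmin_int : ∀ N : ℕ, Integrable (fun ω => min (Z ω) N) μ := fun N =>
    (integrable_const (N : ℝ)).mono' (hZ.min aemeasurable_const).aestronglyMeasurable
      (Eventually.of_forall fun ω => by
        rw [Real.norm_of_nonneg (hmin_nonneg N ω)]
        exact min_le_right _ _)
  have hZ_top : ∫⁻ ω, ENNReal.ofReal (Z ω) ∂μ = ∞ := by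
    by_contra h
    exact hZi ((lintegral_ofReal_ne_top_iff_integrable hZ.aestronglyMeasurable
      (Eventually.of_forall hZ0)).1 h)
  rw [← ENNReal.tendsto_ofReal_nhds_top, ← hZ_top]
  simp_rw [ofReal_integral_eq_lintegral_ofReal (hmin_int _)
    (Eventually.of_forall (hmin_nonneg _))]
  refine lintegral_tendsto_of_tendsto_of_monotone
    (fun N => (hZ.min aemeasurable_const).ennreal_ofReal)
    (Eventually.of_forall fun ω N M hNM =>
      ENNReal.ofReal_le_ofReal (min_le_min_left _ (Nat.cast_le.2 hNM)))
    (Eventually.of_forall fun ω => ?_)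
  refine (ENNReal.continuous_ofReal.tendsto _).comp (tendsto_nhds_of_eventually_eq ?_)
  filter_upwards [eventually_ge_atTop ⌈Z ω⌉₊] with N hN
  exact min_eq_left ((Nat.le_ceil _).trans (Nat.cast_le.2 hN))

theorem exists_one_sub_lt_measureReal_lt_abs_min_sub_integral (hZ : AEMeasurable Z μ)
    (hZ0 : 0 ≤ Z) (hZi : ¬ Integrable Z μ) (s : ℝ) {δ : ℝ} (hδ : 0 < δ) :
    ∃ N : ℕ, 1 - δ < μ.real {ω | s < |min (Z ω) N - ∫ ω', min (Z ω') N ∂μ|} := by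
  obtain ⟨K, hK⟩ :=
    ((tendsto_measureReal_le_atTop hZ).eventually_const_lt (sub_lt_self 1 hδ)).exists
  obtain ⟨N, hN⟩ :=
    ((tendsto_integral_min_natCast_atTop hZ hZ0 hZi).eventually_gt_atTop (K + s)).exists
  refine ⟨N, hK.trans_le (measureReal_mono fun ω (hω : Z ω ≤ K) => ?_)⟩
  have hmin : min (Z ω) N ≤ K := (min_le_left _ _).trans hω
  rw [Set.mem_ofPred_eq, abs_sub_comm]
  exact lt_of_lt_of_le (by linarith) (le_abs_self _)

end Truncation

theorem HasApproxConcentration.integrable_comp [PseudoMetricSpace E] [MeasurableSpace E]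
    [OpensMeasurableSpace E] {μ : Measure Ω} [IsProbabilityMeasure μ] {X : Ω → E}
    {C σ ε : ℝ} (hX : HasApproxConcentration μ X C σ ε) (hXm : AEMeasurable X μ) (hσ : 0 < σ)
    (hε : ε < 1) {L : ℝ≥0} {h : E → ℝ} (hh : LipschitzWith L h) :
    Integrable (fun ω => h (X ω)) μ := by
  have hm : AEStronglyMeasurable (fun ω => h (X ω)) μ :=
    (hh.continuous.measurable.comp_aemeasurable hXm).aestronglyMeasurable
  by_contra hi
  have hZi : ¬ Integrable (fun ω => ‖h (X ω)‖) μ := fun h' => hi ((integrable_norm_iff hm).1 h')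
  -- Raising the constant to `L + 1` keeps the Gaussian scale `(L + 1) σ` positive.
  have hL : LipschitzWith (L + 1) fun a => ‖h a‖ :=
    (lipschitzWith_one_norm.comp hh).weaken (by simp)
  have hbound : ∀ δ > 0, ∀ s > 0,
      1 - δ ≤ C * Real.exp (-(s / (((L + 1 : ℝ≥0) : ℝ) * σ)) ^ 2) + ε := by
    intro δ hδ s hs
    obtain ⟨N, hN⟩ := exists_one_sub_lt_measureReal_lt_abs_min_sub_integral hm.norm.aemeasurable
      (fun ω => norm_nonneg _) hZi s hδ
    exact hN.le.trans (hX _ _ (hL.min_const N) s hs)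
  have htail : Tendsto (fun s => C * Real.exp (-(s / (((L + 1 : ℝ≥0) : ℝ) * σ)) ^ 2) + ε)
      atTop (𝓝 ε) := by
    simpa using (tendsto_mul_exp_neg_div_sq_atTop C (by positivity)).add_const ε
  have hε_ge : 1 ≤ ε := le_of_forall_pos_le_add fun δ hδ => by
    have := ge_of_tendsto htail ((eventually_gt_atTop 0).mono fun s hs => hbound δ hδ s hs)
    linarith
  linarith

theorem HasApproxConcentration.integrable [NormedAddCommGroup E] [MeasurableSpace E]
    [OpensMeasurableSpace E] [SecondCountableTopology E] {μ : Measure Ω} [IsProbabilityMeasure μ]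
    {X : Ω → E} {C σ ε : ℝ} (hX : HasApproxConcentration μ X C σ ε) (hXm : AEMeasurable X μ)
    (hσ : 0 < σ) (hε : ε < 1) : Integrable X μ :=
  (integrable_norm_iff hXm.aestronglyMeasurable).1
    (hX.integrable_comp hXm hσ hε lipschitzWith_one_norm)

theorem LipschitzWith.integrable_comp [NormedAddCommGroup E] {μ : Measure Ω}
    [IsFiniteMeasure μ] {L : ℝ≥0} {f : E → ℝ} (hf : LipschitzWith L f) {Z : Ω → E}
    (hZ : Integrable Z μ) : Integrable (fun ω => f (Z ω)) μ :=
  ((integrable_const ‖f 0‖).add (hZ.norm.const_mul L)).mono'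
    (hf.continuous.comp_aestronglyMeasurable hZ.1)
    (Eventually.of_forall fun ω => by
      show ‖f (Z ω)‖ ≤ ‖f 0‖ + L * ‖Z ω‖
      have := hf.norm_sub_le (Z ω) 0
      rw [sub_zero] at this
      linarith [norm_sub_norm_le (f (Z ω)) (f 0)])

section WithLpProd

variable {p : ℝ≥0∞} [Fact (1 ≤ p)] [SeminormedAddCommGroup E] [SeminormedAddCommGroup F]

theorem WithLp.isometry_toLp_prodMk_left (a : E) :
    Isometry fun b : F => WithLp.toLp p (a, b) :=
  Isometry.of_dist_eq fun b b' => by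
    rw [dist_eq_norm, ← WithLp.toLp_sub, Prod.mk_sub_mk, sub_self, WithLp.norm_toLp_snd,
      dist_eq_norm]

theorem WithLp.isometry_toLp_prodMk_right (b : F) :
    Isometry fun a : E => WithLp.toLp p (a, b) :=
  Isometry.of_dist_eq fun a a' => by
    rw [dist_eq_norm, ← WithLp.toLp_sub, Prod.mk_sub_mk, sub_self, WithLp.norm_toLp_fst,
      dist_eq_norm]

theorem LipschitzWith.comp_toLp_prodMk_left {G : Type*} [PseudoEMetricSpace G] {L : ℝ≥0}
    {f : WithLp p (E × F) → G} (hf : LipschitzWith L f) (a : E) :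
    LipschitzWith L fun b => f (WithLp.toLp p (a, b)) := by
  have := hf.comp (WithLp.isometry_toLp_prodMk_left a).lipschitz
  rwa [mul_one] at this

theorem LipschitzWith.comp_toLp_prodMk_right {G : Type*} [PseudoEMetricSpace G] {L : ℝ≥0}
    {f : WithLp p (E × F) → G} (hf : LipschitzWith L f) (b : F) :
    LipschitzWith L fun a => f (WithLp.toLp p (a, b)) := by
  have := hf.comp (WithLp.isometry_toLp_prodMk_right b).lipschitz
  rwa [mul_one] at this

end WithLpProd

section Independence

variable {μ : Measure Ω} {X : Ω → E} {Y : Ω → F} {f : E × F → ℝ}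

/-- For `Y` independent of `X`, `sectionMean μ Y f (X ω)` is the conditional expectation of
`f (X, Y)` given `X`. -/
noncomputable def sectionMean (μ : Measure Ω) (Y : Ω → F) (f : E × F → ℝ) (a : E) : ℝ :=
  ∫ ω, f (a, Y ω) ∂μ

theorem measurable_sectionMean [MeasurableSpace E] [MeasurableSpace F] [SFinite μ]
    (hY : Measurable Y) (hf : Measurable f) :
    Measurable (sectionMean μ Y f) :=
  (hf.comp (measurable_fst.prodMk (hY.comp measurable_snd))).stronglyMeasurable
    |>.integral_prod_right' |>.measurable

theorem lipschitzWith_sectionMean [PseudoMetricSpace E] [IsProbabilityMeasure μ] {L : ℝ≥0}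
    (hf : ∀ b, LipschitzWith L fun a => f (a, b))
    (hfi : ∀ a, Integrable (fun ω => f (a, Y ω)) μ) :
    LipschitzWith L (sectionMean μ Y f) := by
  refine LipschitzWith.of_dist_le_mul fun a a' => ?_
  rw [Real.dist_eq, sectionMean, sectionMean, ← integral_sub (hfi a) (hfi a')]
  have hbound : ∀ ω, ‖f (a, Y ω) - f (a', Y ω)‖ ≤ L * dist a a' := fun ω => by
    rw [← dist_eq_norm]
    exact (hf (Y ω)).dist_le_mul a a'
  simpa using norm_integral_le_of_norm_le_const (μ := μ) (Eventually.of_forall hbound)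

variable [MeasurableSpace E] [MeasurableSpace F] [IsProbabilityMeasure μ]

theorem ProbabilityTheory.IndepFun.measureReal_prodMk_mem_le (hXY : IndepFun X Y μ)
    (hX : Measurable X) (hY : Measurable Y) {S : Set (E × F)} (hS : MeasurableSet S) {r : ℝ}
    (h : ∀ a, μ.real {ω | (a, Y ω) ∈ S} ≤ r) :
    μ.real {ω | (X ω, Y ω) ∈ S} ≤ r := by
  obtain ⟨ω₀⟩ := nonempty_of_isProbabilityMeasure μ
  have hr : 0 ≤ r := measureReal_nonneg.trans (h (X ω₀))
  have := Measure.isProbabilityMeasure_map (μ := μ) hX.aemeasurable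
  have hmap := (indepFun_iff_map_prod_eq_prod_map_map hX.aemeasurable hY.aemeasurable).1 hXY
  refine ENNReal.toReal_le_of_le_ofReal hr ?_
  calc μ {ω | (X ω, Y ω) ∈ S} = (μ.map X).prod (μ.map Y) S := by
        rw [← hmap, Measure.map_apply (hX.prodMk hY) hS]
        rfl
    _ = ∫⁻ a, μ.map Y (Prod.mk a ⁻¹' S) ∂μ.map X := Measure.prod_apply hS
    _ ≤ ∫⁻ _, ENNReal.ofReal r ∂μ.map X := lintegral_mono fun a => by
        rw [Measure.map_apply hY (measurable_prodMk_left hS)]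
        exact (ENNReal.le_ofReal_iff_toReal_le (measure_ne_top _ _) hr).2 (h a)
    _ = ENNReal.ofReal r := by simp

theorem ProbabilityTheory.IndepFun.integral_sectionMean (hXY : IndepFun X Y μ) (hX : Measurable X)
    (hY : Measurable Y) (hf : Measurable f) (hfi : Integrable (fun ω => f (X ω, Y ω)) μ) :
    ∫ ω, sectionMean μ Y f (X ω) ∂μ = ∫ ω, f (X ω, Y ω) ∂μ := by
  have hmap := (indepFun_iff_map_prod_eq_prod_map_map hX.aemeasurable hY.aemeasurable).1 hXY
  have hfi' : Integrable f ((μ.map X).prod (μ.map Y)) := by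
    rw [← hmap]
    exact (integrable_map_measure hf.aestronglyMeasurable (hX.prodMk hY).aemeasurable).2 hfi
  calc ∫ ω, sectionMean μ Y f (X ω) ∂μ = ∫ a, sectionMean μ Y f a ∂μ.map X :=
        (integral_map hX.aemeasurable (measurable_sectionMean hY hf).aestronglyMeasurable).symm
    _ = ∫ a, ∫ b, f (a, b) ∂μ.map Y ∂μ.map X :=
        integral_congr_ae (Eventually.of_forall fun a => (integral_map hY.aemeasurable
          (hf.comp measurable_prodMk_left).aestronglyMeasurable).symm)
    _ = ∫ q, f q ∂(μ.map X).prod (μ.map Y) := (integral_prod f hfi').symm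
    _ = ∫ ω, f (X ω, Y ω) ∂μ := by
        rw [← hmap, integral_map (hX.prodMk hY).aemeasurable hf.aestronglyMeasurable]

theorem ProbabilityTheory.IndepFun.measureReal_two_mul_lt_abs_sub_integral_le (hXY : IndepFun X Y μ)
    (hX : Measurable X) (hY : Measurable Y) (hf : Measurable f)
    (hfi : Integrable (fun ω => f (X ω, Y ω)) μ) {t r₁ r₂ : ℝ}
    (h₁ : μ.real {ω | t < |sectionMean μ Y f (X ω) - ∫ ω', sectionMean μ Y f (X ω') ∂μ|} ≤ r₁)
    (h₂ : ∀ a, μ.real {ω | t < |f (a, Y ω) - sectionMean μ Y f a|} ≤ r₂) :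
    μ.real {ω | 2 * t < |f (X ω, Y ω) - ∫ ω', f (X ω', Y ω') ∂μ|} ≤ r₁ + r₂ := by
  set g := sectionMean μ Y f
  have hS : MeasurableSet {q : E × F | t < |f q - g q.1|} :=
    measurableSet_lt measurable_const
      (hf.sub ((measurable_sectionMean hY hf).comp measurable_fst)).abs
  have hcond : μ.real {ω | t < |f (X ω, Y ω) - g (X ω)|} ≤ r₂ :=
    hXY.measureReal_prodMk_mem_le hX hY hS h₂
  rw [← hXY.integral_sectionMean hX hY hf hfi]
  calc μ.real {ω | 2 * t < |f (X ω, Y ω) - ∫ ω', g (X ω') ∂μ|}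
      ≤ μ.real ({ω | t < |g (X ω) - ∫ ω', g (X ω') ∂μ|} ∪
          {ω | t < |f (X ω, Y ω) - g (X ω)|}) := measureReal_mono fun ω hω => by
        by_contra hc
        simp only [Set.mem_union, Set.mem_ofPred_eq, not_or, not_lt] at hω hc
        linarith [abs_sub_le (f (X ω, Y ω)) (g (X ω)) (∫ ω', g (X ω') ∂μ)]
    _ ≤ _ := measureReal_union_le _ _
    _ ≤ r₁ + r₂ := add_le_add h₁ hcond

end Independence

end

theorem stmt3_general {Ω : Type*} [MeasureSpace Ω] [IsProbabilityMeasure (ℙ : Measure Ω)]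
    (d : ℕ) (C₁ C₂ c₁ c₂ c₁' c₂' σ₁ σ₂ : ℝ)
    (hC₁ : 0 < C₁) (hC₂ : 0 < C₂) (hc₁ : 0 ≤ c₁) (hc₂ : 0 ≤ c₂)
    (hσ₁ : 0 < σ₁) (hσ₂ : 0 < σ₂)
    (x y : Ω → EuclideanSpace ℝ (Fin d)) (hx : Measurable x) (hy : Measurable y)
    (hindep : IndepFun x y)
    (hACoMx : ∀ (L : NNReal) (h : EuclideanSpace ℝ (Fin d) → ℝ), LipschitzWith L h →
      ∀ s : ℝ, 0 < s →
        (ℙ {ω : Ω | s < |h (x ω) - ∫ ω', h (x ω') ∂ℙ|}).toReal ≤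
          C₁ * Real.exp (-(s / ((L : ℝ) * σ₁)) ^ 2) + c₁ * Real.exp (-c₁' * d))
    (hACoMy : ∀ (L : NNReal) (h : EuclideanSpace ℝ (Fin d) → ℝ), LipschitzWith L h →
      ∀ s : ℝ, 0 < s →
        (ℙ {ω : Ω | s < |h (y ω) - ∫ ω', h (y ω') ∂ℙ|}).toReal ≤
          C₂ * Real.exp (-(s / ((L : ℝ) * σ₂)) ^ 2) + c₂ * Real.exp (-c₂' * d)) :
    ∀ (L : NNReal)
      (f : WithLp 2 (EuclideanSpace ℝ (Fin d) × EuclideanSpace ℝ (Fin d)) → ℝ),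
      LipschitzWith L f →
      ∀ t : ℝ, 0 < t →
        (ℙ {ω : Ω | 2 * t <
            |f ((WithLp.equiv 2 _).symm (x ω, y ω)) -
              ∫ ω', f ((WithLp.equiv 2 _).symm (x ω', y ω')) ∂ℙ|}).toReal ≤
          (C₁ + C₂) * Real.exp (-(t / ((L : ℝ) * max σ₁ σ₂)) ^ 2) +
            (c₁ + c₂) * Real.exp (-(min c₁' c₂') * d) := by
  intro L f hf t ht
  refine le_trans ?_
    (add_concentration_bounds_le hC₁.le hC₂.le hc₁ hc₂ hσ₁ hσ₂ L.coe_nonneg d.cast_nonneg)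
  by_cases hε : c₁ * Real.exp (-c₁' * d) < 1 ∧ c₂ * Real.exp (-c₂' * d) < 1
  swap
  · refine measureReal_le_one.trans ?_
    rw [not_and_or, not_lt, not_lt] at hε
    rcases hε with hε | hε
    · exact hε.trans (le_add_of_le_of_nonneg (le_add_of_nonneg_left (by positivity))
        (by positivity))
    · exact hε.trans (le_add_of_nonneg_of_le (by positivity) (le_add_of_nonneg_left
        (by positivity)))
  obtain ⟨hε₁, hε₂⟩ := hε
  have hxc : HasApproxConcentration ℙ x C₁ σ₁ _ := hACoMx
  have hyc : HasApproxConcentration ℙ y C₂ σ₂ _ := hACoMy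
  set f₂ : EuclideanSpace ℝ (Fin d) × EuclideanSpace ℝ (Fin d) → ℝ := fun q => f (WithLp.toLp 2 q)
  have hf₂ : Measurable f₂ := (hf.continuous.comp (WithLp.prod_continuous_toLp 2 _ _)).measurable
  have hFi : Integrable fun ω => f₂ (x ω, y ω) :=
    (hf.comp (WithLp.prod_lipschitzWith_toLp 2 _ _)).integrable_comp
      ((hxc.integrable hx.aemeasurable hσ₁ hε₁).prodMk (hyc.integrable hy.aemeasurable hσ₂ hε₂))
  have hg : LipschitzWith L (sectionMean ℙ y f₂) :=
    lipschitzWith_sectionMean hf.comp_toLp_prodMk_right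
      fun a => hyc.integrable_comp hy.aemeasurable hσ₂ hε₂ (hf.comp_toLp_prodMk_left a)
  exact hindep.measureReal_two_mul_lt_abs_sub_integral_le hx hy hf₂ hFi (hxc L _ hg t ht)
    fun a => hyc L _ (hf.comp_toLp_prodMk_left a) t ht

/-- ACoM for the pair of two independent random vectors: if `x ~ p₁` and `y ~ p₂` in `ℝ^d` are
independent and each satisfies ACoM with parameters `(Cᵢ, cᵢ, cᵢ', d, σᵢ)`, then `(x, y) ∈ ℝ^{2d}`
(with the Euclidean norm on the product) satisfies, for every `L`-Lipschitz `f : ℝ^{2d} → ℝ` and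
`t > 0`,
`P(|f(x,y) − E f(x,y)| > 2t) ≤ (C₁+C₂) exp(−(t/(L max{σ₁,σ₂}))²) + (c₁+c₂) exp(−min{c₁',c₂'} d)`. -/
theorem stmt3 {Ω : Type*} [MeasureSpace Ω] [IsProbabilityMeasure (ℙ : Measure Ω)]
    (d : ℕ) (C₁ C₂ c₁ c₂ c₁' c₂' σ₁ σ₂ : ℝ)
    (hC₁ : 0 < C₁) (hC₂ : 0 < C₂) (hc₁ : 0 ≤ c₁) (hc₂ : 0 ≤ c₂)
    (hc₁' : 0 < c₁') (hc₂' : 0 < c₂') (hσ₁ : 0 < σ₁) (hσ₂ : 0 < σ₂)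
    (x y : Ω → EuclideanSpace ℝ (Fin d)) (hx : Measurable x) (hy : Measurable y)
    (hindep : IndepFun x y)
    (hACoMx : ∀ (L : NNReal) (h : EuclideanSpace ℝ (Fin d) → ℝ), LipschitzWith L h →
      ∀ s : ℝ, 0 < s →
        (ℙ {ω : Ω | s < |h (x ω) - ∫ ω', h (x ω') ∂ℙ|}).toReal ≤
          C₁ * Real.exp (-(s / ((L : ℝ) * σ₁)) ^ 2) + c₁ * Real.exp (-c₁' * d))
    (hACoMy : ∀ (L : NNReal) (h : EuclideanSpace ℝ (Fin d) → ℝ), LipschitzWith L h →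
      ∀ s : ℝ, 0 < s →
        (ℙ {ω : Ω | s < |h (y ω) - ∫ ω', h (y ω') ∂ℙ|}).toReal ≤
          C₂ * Real.exp (-(s / ((L : ℝ) * σ₂)) ^ 2) + c₂ * Real.exp (-c₂' * d)) :
    ∀ (L : NNReal)
      (f : WithLp 2 (EuclideanSpace ℝ (Fin d) × EuclideanSpace ℝ (Fin d)) → ℝ),
      LipschitzWith L f →
      ∀ t : ℝ, 0 < t →
        (ℙ {ω : Ω | 2 * t <
            |f ((WithLp.equiv 2 _).symm (x ω, y ω)) -
              ∫ ω', f ((WithLp.equiv 2 _).symm (x ω', y ω')) ∂ℙ|}).toReal ≤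
          (C₁ + C₂) * Real.exp (-(t / ((L : ℝ) * max σ₁ σ₂)) ^ 2) +
            (c₁ + c₂) * Real.exp (-(min c₁' c₂') * d) :=
  stmt3_general d C₁ C₂ c₁ c₂ c₁' c₂' σ₁ σ₂ hC₁ hC₂ hc₁ hc₂ hσ₁ hσ₂ x y hx hy hindep hACoMx hACoMy
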